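/- For k = 1/√2, the quantities a = K(1/√2) and b = 2E(1/√2) − K(1/√2) satisfy a·b = π/2. -/

import Mathlib

/-!
With `v = cos θ` one has `1 - sin² θ / 2 = (1 + v²) / 2` and `√(1 - v⁴) = sin θ · √(1 + v²)`, so
`K(1/√2) = √2 ∫₀¹ dv / √(1 - v⁴)` and `2E(1/√2) - K(1/√2) = √2 ∫₀¹ v² dv / √(1 - v⁴)`.
The substitution `x = v⁴` makes these `√2 B(1/4, 1/2) / 4` and `√2 B(3/4, 1/2) / 4`, and the
product of the two Beta values telescopes to `Γ(1/4) Γ(1/2)² / Γ(5/4)`, which is `4π` since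
`Γ(5/4) = Γ(1/4) / 4` and `Γ(1/2)² = π`.
-/

open Real

noncomputable def ellK (k : ℝ) : ℝ :=
  ∫ θ in (0 : ℝ)..(π / 2), 1 / Real.sqrt (1 - k ^ 2 * Real.sin θ ^ 2)

noncomputable def ellE (k : ℝ) : ℝ :=
  ∫ θ in (0 : ℝ)..(π / 2), Real.sqrt (1 - k ^ 2 * Real.sin θ ^ 2)

open MeasureTheory Set

theorem integral_rpow_mul_one_sub_rpow {α β : ℝ} (hα : 0 < α) (hβ : 0 < β) :
    ∫ x in Ioo (0 : ℝ) 1, x ^ (α - 1) * (1 - x) ^ (β - 1) = ProbabilityTheory.beta α β := by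
  have h : Complex.betaIntegral α β
      = ((∫ x in (0 : ℝ)..1, x ^ (α - 1) * (1 - x) ^ (β - 1) : ℝ) : ℂ) := by
    rw [Complex.betaIntegral, ← intervalIntegral.integral_ofReal]
    refine intervalIntegral.integral_congr fun x hx => ?_
    rw [uIcc_of_le zero_le_one] at hx
    push_cast
    rw [Complex.ofReal_cpow hx.1, Complex.ofReal_cpow (sub_nonneg.2 hx.2)]
    push_cast
    ring
  rw [ProbabilityTheory.beta_eq_betaIntegralReal α β hα hβ, h, Complex.ofReal_re,
    intervalIntegral.integral_of_le zero_le_one, integral_Ioc_eq_integral_Ioo]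

theorem integral_sin_mul_comp_cos (g : ℝ → ℝ) :
    ∫ θ in Ioo 0 (π / 2), sin θ * g (cos θ) = ∫ v in Ioo 0 1, g v := by
  have h := integral_Icc_deriv_smul_of_deriv_nonpos (f := cos) (f' := fun θ => -sin θ) (g := g)
    continuousOn_cos (fun θ _ => hasDerivAt_cos θ)
    (fun θ hθ => neg_nonpos.2 (sin_nonneg_of_nonneg_of_le_pi hθ.1.le (by linarith [hθ.2, pi_pos])))
    pi_div_two_pos.le
  simp only [cos_pi_div_two, cos_zero, smul_eq_mul, neg_mul, integral_neg, neg_inj,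
    integral_Icc_eq_integral_Ioo] at h
  exact h

theorem integral_pow_mul_one_sub_pow_rpow {m : ℕ} (hm : m ≠ 0) (n : ℕ) {β : ℝ} (hβ : 0 < β) :
    ∫ v in Ioo (0 : ℝ) 1, v ^ n * (1 - v ^ m) ^ (β - 1)
      = ProbabilityTheory.beta ((n + 1) / m) β / m := by
  have hm' : (0 : ℝ) < m := Nat.cast_pos.2 (Nat.pos_of_ne_zero hm)
  set α : ℝ := (n + 1) / m with hα_def
  have hα : 0 < α := by positivity
  have h := integral_Icc_deriv_smul_of_deriv_nonneg (f := fun v : ℝ => v ^ m)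
    (f' := fun v => m * v ^ (m - 1)) (g := fun x => x ^ (α - 1) * (1 - x) ^ (β - 1))
    (continuous_pow m).continuousOn (fun v _ => hasDerivAt_pow m v)
    (fun v hv => by have := hv.1; positivity) zero_le_one
  simp only [zero_pow hm, one_pow, smul_eq_mul, integral_Icc_eq_integral_Ioo] at h
  rw [← integral_rpow_mul_one_sub_rpow hα hβ, ← h, eq_div_iff hm'.ne', ← integral_mul_const]
  refine setIntegral_congr_fun measurableSet_Ioo fun v hv => ?_
  have hv0 : 0 < v := hv.1
  have key : v ^ (m - 1) * (v ^ m) ^ (α - 1) = v ^ n := by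
    have hexp : (m : ℝ) * (α - 1) = n - (m - 1 : ℕ) := by
      rw [Nat.cast_sub (Nat.one_le_iff_ne_zero.2 hm), hα_def]
      field_simp
      ring
    rw [← rpow_natCast v m, ← rpow_mul hv0.le, hexp, rpow_sub hv0, rpow_natCast, rpow_natCast,
      mul_div_cancel₀ _ (pow_ne_zero _ hv0.ne')]
  rw [← key]
  ring

theorem sqrt_one_sub_cos_pow_four {θ : ℝ} (hθ : 0 ≤ sin θ) :
    √(1 - cos θ ^ 4) = sin θ * √(1 + cos θ ^ 2) := by
  have h : 1 - cos θ ^ 4 = sin θ ^ 2 * (1 + cos θ ^ 2) := by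
    linear_combination (1 + cos θ ^ 2) * (sin_sq_add_cos_sq θ).symm
  rw [h, sqrt_mul (sq_nonneg _), sqrt_sq hθ]

theorem integral_cos_pow_div_sqrt_one_add_cos_sq (n : ℕ) :
    ∫ θ in (0 : ℝ)..(π / 2), cos θ ^ n / √(1 + cos θ ^ 2)
      = ProbabilityTheory.beta ((n + 1) / 4) (1 / 2) / 4 := by
  have h := integral_pow_mul_one_sub_pow_rpow four_ne_zero n one_half_pos
  push_cast at h
  rw [intervalIntegral.integral_of_le pi_div_two_pos.le, integral_Ioc_eq_integral_Ioo, ← h,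
    ← integral_sin_mul_comp_cos]
  refine setIntegral_congr_fun measurableSet_Ioo fun θ hθ => ?_
  have hsin : 0 < sin θ := sin_pos_of_pos_of_lt_pi hθ.1 (by linarith [hθ.2, pi_pos])
  have hsqrt : 0 < √(1 + cos θ ^ 2) := by positivity
  rw [show (1 : ℝ) / 2 - 1 = -(1 / 2) by norm_num, rpow_neg (by nlinarith [sin_sq_add_cos_sq θ]),
    ← sqrt_eq_rpow, sqrt_one_sub_cos_pow_four hsin.le]
  field_simp

theorem sqrt_one_sub_half_sin_sq (θ : ℝ) :
    √(1 - (1 / √2) ^ 2 * sin θ ^ 2) = √(1 + cos θ ^ 2) / √2 := by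
  rw [← sqrt_div (by positivity)]
  congr 1
  rw [div_pow, one_pow, sq_sqrt zero_le_two]
  linear_combination (-1 / 2 : ℝ) * sin_sq_add_cos_sq θ

theorem ellK_one_div_sqrt_two :
    ellK (1 / √2) = √2 * ∫ θ in (0 : ℝ)..(π / 2), 1 / √(1 + cos θ ^ 2) := by
  simp_rw [ellK, sqrt_one_sub_half_sin_sq, ← intervalIntegral.integral_const_mul, one_div_div,
    mul_one_div]

theorem two_mul_ellE_sub_ellK_one_div_sqrt_two :
    2 * ellE (1 / √2) - ellK (1 / √2)
      = √2 * ∫ θ in (0 : ℝ)..(π / 2), cos θ ^ 2 / √(1 + cos θ ^ 2) := by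
  rw [ellK_one_div_sqrt_two, ellE]
  simp_rw [sqrt_one_sub_half_sin_sq, ← intervalIntegral.integral_const_mul]
  rw [← intervalIntegral.integral_sub ((by fun_prop : Continuous _).intervalIntegrable _ _) ?_]
  · refine intervalIntegral.integral_congr fun θ _ => ?_
    have hsq : √(1 + cos θ ^ 2) ^ 2 = 1 + cos θ ^ 2 := sq_sqrt (by positivity)
    have h2 : √2 ^ 2 = 2 := sq_sqrt zero_le_two
    field_simp
    linear_combination 2 * hsq - (1 + cos θ ^ 2) * h2
  · exact (continuous_const.mul (continuous_const.div (by fun_prop)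
      fun θ => (sqrt_pos.2 (by positivity)).ne')).intervalIntegrable _ _

theorem beta_mul_beta_add {a b c : ℝ} (h : Gamma (a + b) ≠ 0) :
    ProbabilityTheory.beta a b * ProbabilityTheory.beta (a + b) c
      = Gamma a * Gamma b * Gamma c / Gamma (a + b + c) := by
  simp only [ProbabilityTheory.beta]
  field_simp

theorem legendre_special_case :
    ellK (1 / Real.sqrt 2) * (2 * ellE (1 / Real.sqrt 2) - ellK (1 / Real.sqrt 2)) = π / 2 := by
  have hK : ∫ θ in (0 : ℝ)..(π / 2), 1 / √(1 + cos θ ^ 2)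
      = ProbabilityTheory.beta (1 / 4) (1 / 2) / 4 := by
    simpa using integral_cos_pow_div_sqrt_one_add_cos_sq 0
  have hE : ∫ θ in (0 : ℝ)..(π / 2), cos θ ^ 2 / √(1 + cos θ ^ 2)
      = ProbabilityTheory.beta (1 / 4 + 1 / 2) (1 / 2) / 4 := by
    rw [integral_cos_pow_div_sqrt_one_add_cos_sq 2]
    norm_num
  have hB : ProbabilityTheory.beta (1 / 4) (1 / 2) * ProbabilityTheory.beta (1 / 4 + 1 / 2) (1 / 2)
      = 4 * π := by
    rw [beta_mul_beta_add (Gamma_pos_of_pos (by norm_num)).ne', Gamma_one_half_eq,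
      show (1 : ℝ) / 4 + 1 / 2 + 1 / 2 = 1 / 4 + 1 by norm_num, Gamma_add_one (by norm_num),
      mul_assoc, mul_self_sqrt pi_pos.le]
    field_simp
  rw [two_mul_ellE_sub_ellK_one_div_sqrt_two, ellK_one_div_sqrt_two, hK, hE]
  calc √2 * (ProbabilityTheory.beta (1 / 4) (1 / 2) / 4)
          * (√2 * (ProbabilityTheory.beta (1 / 4 + 1 / 2) (1 / 2) / 4))
        = √2 ^ 2 * (ProbabilityTheory.beta (1 / 4) (1 / 2)
          * ProbabilityTheory.beta (1 / 4 + 1 / 2) (1 / 2)) / 16 := by ring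
    _ = π / 2 := by rw [sq_sqrt zero_le_two, hB]; ring
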